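/- Let p > 3 be a prime and q, m positive integers with |m|_p = |q|_p, |q - m|_p < |q|_p, and q, m ≠ 0 in ℚ_p. Then f(z) = 8m³z² - (16m³ - 24m²q + 6mq² + q³)z - 8(q-m)³ has no root z ∈ ℚ_p with |z - 1|_p < 1. -/
import Mathlib


/-- For `p > 3`, `|m|_p = |q|_p` and `|q - m|_p < |q|_p`, the Potts quadratic
has no root `z` with `|z - 1|_p < 1`. -/
theorem potts_quadratic_no_root (p : ℕ) [Fact p.Prime] (hp : 3 < p)
    (q m : ℕ) (hq : 0 < q) (hm : 0 < m)
    (hq0 : (q : ℚ_[p]) ≠ 0) (hm0 : (m : ℚ_[p]) ≠ 0)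
    (hnorm : ‖(m : ℚ_[p])‖ = ‖(q : ℚ_[p])‖)
    (hqm : ‖(q : ℚ_[p]) - (m : ℚ_[p])‖ < ‖(q : ℚ_[p])‖) :
    ¬ ∃ z : ℚ_[p],
      (8 * (m : ℚ_[p]) ^ 3 * z ^ 2
        - (16 * (m : ℚ_[p]) ^ 3 - 24 * (m : ℚ_[p]) ^ 2 * (q : ℚ_[p])
            + 6 * (m : ℚ_[p]) * (q : ℚ_[p]) ^ 2 + (q : ℚ_[p]) ^ 3) * z
        - 8 * ((q : ℚ_[p]) - (m : ℚ_[p])) ^ 3 = 0) ∧ ‖z - 1‖ < 1 := by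
  rintro ⟨z, hz, hz1⟩
  set Q : ℚ_[p] := (q : ℚ_[p]) with hQ
  set M : ℚ_[p] := (m : ℚ_[p]) with hM
  have hQpos : 0 < ‖Q‖ := norm_pos_iff.mpr hq0
  have hQ3pos : 0 < ‖Q‖ ^ 3 := pow_pos hQpos 3
  -- integer norms
  have hint : ∀ n : ℤ, ‖((n : ℤ) : ℚ_[p])‖ ≤ 1 := fun n => Padic.norm_int_le_one n
  have h8 : ‖(8 : ℚ_[p])‖ ≤ 1 := by have := hint 8; norm_num at this ⊢; exact this
  have h16 : ‖(16 : ℚ_[p])‖ ≤ 1 := by have := hint 16; norm_num at this ⊢; exact this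
  have h24 : ‖(24 : ℚ_[p])‖ ≤ 1 := by have := hint 24; norm_num at this ⊢; exact this
  have h6 : ‖(6 : ℚ_[p])‖ ≤ 1 := by have := hint 6; norm_num at this ⊢; exact this
  have h2 : ‖(2 : ℚ_[p])‖ ≤ 1 := by have := hint 2; norm_num at this ⊢; exact this
  have h9 : ‖(9 : ℚ_[p])‖ = 1 := by
    have hle : ‖((9 : ℤ) : ℚ_[p])‖ ≤ 1 := hint 9
    have hnlt : ¬ ‖((9 : ℤ) : ℚ_[p])‖ < 1 := by
      rw [Padic.norm_intCast_lt_one_iff]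
      intro hdvd
      have hdvd' : p ∣ 9 := by exact_mod_cast hdvd
      have : p ∣ 3 := (Fact.out : p.Prime).dvd_of_dvd_pow (n := 2) (by norm_num [hdvd'])
      have := Nat.le_of_dvd (by norm_num) this
      omega
    have : ‖((9 : ℤ) : ℚ_[p])‖ = 1 := le_antisymm hle (not_lt.mp hnlt)
    simpa using this
  -- ‖Q - 2M‖ = ‖Q‖
  have h2m : ‖Q - 2 * M‖ = ‖Q‖ := by
    have hne : ‖Q - M‖ ≠ ‖-M‖ := by
      rw [norm_neg, hnorm]; exact ne_of_lt hqm
    have heq : Q - 2 * M = (Q - M) + (-M) := by ring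
    rw [heq, Padic.add_eq_max_of_ne hne, norm_neg, hnorm]
    exact max_eq_right hqm.le
  set B : ℚ_[p] := 16 * M ^ 3 - 24 * M ^ 2 * Q + 6 * M * Q ^ 2 + Q ^ 3 with hB
  have hMQ : ‖M‖ ^ 3 = ‖Q‖ ^ 3 := by rw [hnorm]
  have hBle : ‖B‖ ≤ ‖Q‖ ^ 3 := by
    have t1 : ‖16 * M ^ 3‖ ≤ ‖Q‖ ^ 3 := by
      rw [norm_mul, norm_pow, ← hMQ] at *
      calc ‖(16:ℚ_[p])‖ * ‖M‖ ^ 3 ≤ 1 * ‖M‖ ^ 3 := by gcongr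
        _ = ‖M‖ ^ 3 := one_mul _
    have t2 : ‖24 * M ^ 2 * Q‖ ≤ ‖Q‖ ^ 3 := by
      rw [norm_mul, norm_mul, norm_pow, hnorm]
      calc ‖(24:ℚ_[p])‖ * ‖Q‖ ^ 2 * ‖Q‖ ≤ 1 * ‖Q‖ ^ 2 * ‖Q‖ := by gcongr
        _ = ‖Q‖ ^ 3 := by ring
    have t3 : ‖6 * M * Q ^ 2‖ ≤ ‖Q‖ ^ 3 := by
      rw [norm_mul, norm_mul, norm_pow, hnorm]
      calc ‖(6:ℚ_[p])‖ * ‖Q‖ * ‖Q‖ ^ 2 ≤ 1 * ‖Q‖ * ‖Q‖ ^ 2 := by gcongr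
        _ = ‖Q‖ ^ 3 := by ring
    have t4 : ‖Q ^ 3‖ ≤ ‖Q‖ ^ 3 := le_of_eq (norm_pow _ _)
    have s1 : ‖16 * M ^ 3 - 24 * M ^ 2 * Q‖ ≤ ‖Q‖ ^ 3 := by
      rw [sub_eq_add_neg]
      exact le_trans (Padic.nonarchimedean _ _)
        (max_le t1 (by rwa [norm_neg]))
    have s2 : ‖16 * M ^ 3 - 24 * M ^ 2 * Q + 6 * M * Q ^ 2‖ ≤ ‖Q‖ ^ 3 :=
      le_trans (Padic.nonarchimedean _ _) (max_le s1 t3)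
    exact le_trans (Padic.nonarchimedean _ _) (max_le s2 t4)
  have hz2 : ‖z + 1‖ ≤ 1 := by
    have heq : z + 1 = (z - 1) + 2 := by ring
    rw [heq]
    exact le_trans (Padic.nonarchimedean _ _) (max_le hz1.le h2)
  -- key algebraic identity
  have key : (-9 : ℚ_[p]) * Q ^ 2 * (Q - 2 * M)
      = -(8 * M ^ 3 * (z - 1) * (z + 1)) + B * (z - 1) := by
    rw [hB]; linear_combination hz
  have hLHS : ‖(-9 : ℚ_[p]) * Q ^ 2 * (Q - 2 * M)‖ = ‖Q‖ ^ 3 := by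
    rw [norm_mul, norm_mul, norm_pow, h2m,
      show ((-9 : ℚ_[p])) = -(9 : ℚ_[p]) by norm_num, norm_neg, h9]
    ring
  have hT1 : ‖-(8 * M ^ 3 * (z - 1) * (z + 1))‖ < ‖Q‖ ^ 3 := by
    rw [norm_neg, norm_mul, norm_mul, norm_mul, norm_pow]
    calc ‖(8:ℚ_[p])‖ * ‖M‖ ^ 3 * ‖z - 1‖ * ‖z + 1‖
        ≤ 1 * ‖Q‖ ^ 3 * ‖z - 1‖ * 1 := by rw [← hMQ]; gcongr
      _ = ‖Q‖ ^ 3 * ‖z - 1‖ := by ring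
      _ < ‖Q‖ ^ 3 * 1 := by exact mul_lt_mul_of_pos_left hz1 hQ3pos
      _ = ‖Q‖ ^ 3 := mul_one _
  have hT2 : ‖B * (z - 1)‖ < ‖Q‖ ^ 3 := by
    rw [norm_mul]
    calc ‖B‖ * ‖z - 1‖ ≤ ‖Q‖ ^ 3 * ‖z - 1‖ := by gcongr
      _ < ‖Q‖ ^ 3 * 1 := mul_lt_mul_of_pos_left hz1 hQ3pos
      _ = ‖Q‖ ^ 3 := mul_one _
  have : ‖Q‖ ^ 3 < ‖Q‖ ^ 3 := by
    calc ‖Q‖ ^ 3 = ‖(-9 : ℚ_[p]) * Q ^ 2 * (Q - 2 * M)‖ := hLHS.symm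
      _ = ‖-(8 * M ^ 3 * (z - 1) * (z + 1)) + B * (z - 1)‖ := by rw [key]
      _ ≤ max ‖-(8 * M ^ 3 * (z - 1) * (z + 1))‖ ‖B * (z - 1)‖ :=
          Padic.nonarchimedean _ _
      _ < ‖Q‖ ^ 3 := max_lt hT1 hT2
  exact lt_irrefl _ this
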